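/- Fix n, p, d, K. Let X̃ ∈ ℝ^{n×p} be a data matrix with rows x̃_i, M̃ ∈ ℝ^{K×p} a matrix of class means with rows μ̃_k, labels y_1, …, y_n ∈ {1, …, K}, one-hot matrix Y ∈ ℝ^{n×K} with Y_{ik} = 1[y_i = k], and priors π_1, …, π_K > 0. For L ∈ ℝ^{p×d}, set Z = X̃ L ∈ ℝ^{n×d}, W = M̃ L ∈ ℝ^{K×d}, logits δ_{ik}(L) = z_iᵀ w_k - (1/2)‖w_k‖² + log π_k (where z_i, w_k are the rows of Z, W), softmax probabilities P_{ik}(L) = exp(δ_{ik}) / ∑_j exp(δ_{ij}), residual matrix R = Y - P ∈ ℝ^{n×K}, and cross-entropy loss L_CE(L) = -(1/n) ∑_{i=1}^n ∑_{k=1}^K Y_{ik} log P_{ik}(L). Then L_CE is differentiable at every L and its gradient with respect to L (the matrix G with DL_CE(L)[H] = tr(Hᵀ G)) equals G = -(1/n) ( X̃ᵀ R W + M̃ᵀ (Rᵀ Z) - M̃ᵀ diag(𝟙ᵀ R) W ), where 𝟙 ∈ ℝ^n is the all-ones vector and diag(𝟙ᵀ R) is the K × K diagonal matrix with the column sums of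 R on its diagonal. -/

import Mathlib

open Matrix

attribute [local instance] Matrix.frobeniusNormedAddCommGroup Matrix.frobeniusNormedSpace

variable {n p d K : ℕ}

/-- The logits of LDA-GO in the factored parametrization: with embeddings
`Z = X̃ L` and `W = M̃ L`, `δ_{ik}(L) = z_iᵀ w_k - (1/2)‖w_k‖² + log π_k`. -/
noncomputable def logit (X : Matrix (Fin n) (Fin p) ℝ) (M : Matrix (Fin K) (Fin p) ℝ)
    (pr : Fin K → ℝ) (L : Matrix (Fin p) (Fin d) ℝ) (i : Fin n) (k : Fin K) : ℝ :=
  (X * L) i ⬝ᵥ (M * L) k - (1 / 2) * ((M * L) k ⬝ᵥ (M * L) k) + Real.log (pr k)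

/-- The softmax probabilities `P_{ik}(L)` of the LDA-GO logits. -/
noncomputable def prob (X : Matrix (Fin n) (Fin p) ℝ) (M : Matrix (Fin K) (Fin p) ℝ)
    (pr : Fin K → ℝ) (L : Matrix (Fin p) (Fin d) ℝ) (i : Fin n) (k : Fin K) : ℝ :=
  Real.exp (logit X M pr L i k) / ∑ j, Real.exp (logit X M pr L i j)

/-- The one-hot label matrix `Y ∈ ℝ^{n×K}`, `Y_{ik} = 1[y_i = k]`. -/
def oneHot (y : Fin n → Fin K) : Matrix (Fin n) (Fin K) ℝ :=
  Matrix.of fun i k => if y i = k then (1 : ℝ) else 0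

/-- The residual matrix `R = Y - P ∈ ℝ^{n×K}`. -/
noncomputable def resid (X : Matrix (Fin n) (Fin p) ℝ) (M : Matrix (Fin K) (Fin p) ℝ)
    (pr : Fin K → ℝ) (y : Fin n → Fin K) (L : Matrix (Fin p) (Fin d) ℝ) :
    Matrix (Fin n) (Fin K) ℝ :=
  oneHot y - Matrix.of fun i k => prob X M pr L i k

/-- The cross-entropy loss `L_CE(L) = -(1/n) ∑_i ∑_k Y_{ik} log P_{ik}(L)`. -/
noncomputable def ceLoss (X : Matrix (Fin n) (Fin p) ℝ) (M : Matrix (Fin K) (Fin p) ℝ)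
    (pr : Fin K → ℝ) (y : Fin n → Fin K) (L : Matrix (Fin p) (Fin d) ℝ) : ℝ :=
  -(1 / (n : ℝ)) * ∑ i, ∑ k, oneHot y i k * Real.log (prob X M pr L i k)

/-- The continuous linear functional `H ↦ tr(Hᵀ G)` on `p × d` matrices. -/
noncomputable def gradPairing (G : Matrix (Fin p) (Fin d) ℝ) :
    Matrix (Fin p) (Fin d) ℝ →L[ℝ] ℝ :=
  LinearMap.toContinuousLinearMap
    { toFun := fun H => (Hᵀ * G).trace
      map_add' := by
        intro H₁ H₂
        simp [Matrix.transpose_add, Matrix.add_mul]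
      map_smul' := by
        intro c H
        simp [Matrix.transpose_smul, Matrix.smul_mul] }

noncomputable def colFun (v : Fin p → ℝ) (c : Fin d) : Matrix (Fin p) (Fin d) ℝ →L[ℝ] ℝ :=
  LinearMap.toContinuousLinearMap
    { toFun := fun L => ∑ a, v a * L a c
      map_add' := by intro A B; simp [mul_add, Finset.sum_add_distrib]
      map_smul' := by
        intro r A
        simp [Matrix.smul_apply, Finset.mul_sum, mul_left_comm] }

lemma colFun_apply (v : Fin p → ℝ) (c : Fin d) (L : Matrix (Fin p) (Fin d) ℝ) :
    colFun v c L = ∑ a, v a * L a c := rfl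

lemma gradPairing_apply (G H : Matrix (Fin p) (Fin d) ℝ) :
    gradPairing G H = ∑ c, ∑ a, H a c * G a c := by
  simp [gradPairing, Matrix.trace, Matrix.mul_apply, Matrix.diag, Matrix.transpose_apply]

lemma gradPairing_sub (A B : Matrix (Fin p) (Fin d) ℝ) :
    gradPairing (A - B) = gradPairing A - gradPairing B := by
  ext H
  simp [gradPairing_apply, Matrix.sub_apply, mul_sub, Finset.sum_sub_distrib]

lemma gradPairing_smul (r : ℝ) (A : Matrix (Fin p) (Fin d) ℝ) :
    gradPairing (r • A) = r • gradPairing A := by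
  ext H
  simp [gradPairing_apply, Matrix.smul_apply, Finset.mul_sum, mul_left_comm]

lemma gradPairing_sum {ι : Type*} (s : Finset ι) (f : ι → Matrix (Fin p) (Fin d) ℝ) :
    gradPairing (∑ j ∈ s, f j) = ∑ j ∈ s, gradPairing (f j) := by
  ext H
  simp only [ContinuousLinearMap.coe_sum', Finset.sum_apply, gradPairing_apply,
    Matrix.sum_apply, Finset.mul_sum]
  have h1 : ∀ c : Fin d, ∑ a, ∑ j ∈ s, H a c * f j a c = ∑ j ∈ s, ∑ a, H a c * f j a c :=
    fun c => Finset.sum_comm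
  simp only [h1]
  exact Finset.sum_comm

noncomputable def Gm (X : Matrix (Fin n) (Fin p) ℝ) (M : Matrix (Fin K) (Fin p) ℝ)
    (L : Matrix (Fin p) (Fin d) ℝ) (i : Fin n) (k : Fin K) : Matrix (Fin p) (Fin d) ℝ :=
  Matrix.of fun a c => X i a * (M * L) k c + M k a * (X * L) i c - M k a * (M * L) k c

lemma hasFDerivAt_logit (X : Matrix (Fin n) (Fin p) ℝ) (M : Matrix (Fin K) (Fin p) ℝ)
    (pr : Fin K → ℝ) (L : Matrix (Fin p) (Fin d) ℝ) (i : Fin n) (k : Fin K) :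
    HasFDerivAt (fun L' => logit X M pr L' i k) (gradPairing (Gm X M L i k)) L := by
  have hrw : (fun L' : Matrix (Fin p) (Fin d) ℝ => logit X M pr L' i k) =
      fun L' => (∑ c, colFun (X i) c L' * colFun (M k) c L') -
        (1 / 2) * ∑ c, colFun (M k) c L' * colFun (M k) c L' + Real.log (pr k) := by
    funext L'
    simp [logit, dotProduct, Matrix.mul_apply, colFun_apply]
  rw [hrw]
  have h1 : HasFDerivAt
      (fun L' : Matrix (Fin p) (Fin d) ℝ => ∑ c, colFun (X i) c L' * colFun (M k) c L')
      (∑ c, (colFun (X i) c L • colFun (M k) c + colFun (M k) c L • colFun (X i) c)) L :=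
    HasFDerivAt.fun_sum fun c _ =>
      ((colFun (X i) c).hasFDerivAt).mul ((colFun (M k) c).hasFDerivAt)
  have h2 : HasFDerivAt
      (fun L' : Matrix (Fin p) (Fin d) ℝ => ∑ c, colFun (M k) c L' * colFun (M k) c L')
      (∑ c, (colFun (M k) c L • colFun (M k) c + colFun (M k) c L • colFun (M k) c)) L :=
    HasFDerivAt.fun_sum fun c _ =>
      ((colFun (M k) c).hasFDerivAt).mul ((colFun (M k) c).hasFDerivAt)
  have h : HasFDerivAt
      (fun L' : Matrix (Fin p) (Fin d) ℝ => (∑ c, colFun (X i) c L' * colFun (M k) c L') -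
        (1 / 2) * ∑ c, colFun (M k) c L' * colFun (M k) c L' + Real.log (pr k))
      ((∑ c, (colFun (X i) c L • colFun (M k) c + colFun (M k) c L • colFun (X i) c)) -
        (1 / 2 : ℝ) • (∑ c, (colFun (M k) c L • colFun (M k) c + colFun (M k) c L • colFun (M k) c))) L :=
    (h1.sub (h2.const_mul (1 / 2 : ℝ))).add_const (Real.log (pr k))
  convert h using 1
  have hW : ∀ c, colFun (M k) c L = (M * L) k c := by
    intro c; simp [colFun_apply, Matrix.mul_apply]
  have hZ : ∀ c, colFun (X i) c L = (X * L) i c := by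
    intro c; simp [colFun_apply, Matrix.mul_apply]
  ext H
  simp only [gradPairing_apply, ContinuousLinearMap.sub_apply, ContinuousLinearMap.smul_apply,
    ContinuousLinearMap.coe_sum', Finset.sum_apply, ContinuousLinearMap.add_apply,
    smul_eq_mul, hW, hZ, Gm, Matrix.of_apply]
  simp only [colFun_apply]
  rw [Finset.mul_sum, ← Finset.sum_sub_distrib]
  refine Finset.sum_congr rfl fun c _ => ?_
  simp only [Finset.mul_sum, ← Finset.sum_sub_distrib, ← Finset.sum_add_distrib]
  refine Finset.sum_congr rfl fun a _ => ?_
  ring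


lemma sumexp_pos (X : Matrix (Fin n) (Fin p) ℝ) (M : Matrix (Fin K) (Fin p) ℝ)
    (pr : Fin K → ℝ) (L : Matrix (Fin p) (Fin d) ℝ) (i : Fin n) (k : Fin K) :
    0 < ∑ j, Real.exp (logit X M pr L i j) :=
  Finset.sum_pos (fun j _ => Real.exp_pos _) ⟨k, Finset.mem_univ k⟩

lemma hasFDerivAt_logprob (X : Matrix (Fin n) (Fin p) ℝ) (M : Matrix (Fin K) (Fin p) ℝ)
    (pr : Fin K → ℝ) (L : Matrix (Fin p) (Fin d) ℝ) (i : Fin n) (k : Fin K) :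
    HasFDerivAt (fun L' => Real.log (prob X M pr L' i k))
      (gradPairing (Gm X M L i k - ∑ j, prob X M pr L i j • Gm X M L i j)) L := by
  have hrw : (fun L' : Matrix (Fin p) (Fin d) ℝ => Real.log (prob X M pr L' i k)) =
      fun L' => logit X M pr L' i k - Real.log (∑ j, Real.exp (logit X M pr L' i j)) := by
    funext L'
    rw [prob, Real.log_div (Real.exp_ne_zero _) (ne_of_gt (sumexp_pos X M pr L' i k)),
      Real.log_exp]
  rw [hrw]
  have hS : HasFDerivAt (fun L' => ∑ j, Real.exp (logit X M pr L' i j))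
      (∑ j, Real.exp (logit X M pr L i j) • gradPairing (Gm X M L i j)) L :=
    HasFDerivAt.fun_sum fun j _ => (hasFDerivAt_logit X M pr L i j).exp
  have h : HasFDerivAt
      (fun L' => logit X M pr L' i k - Real.log (∑ j, Real.exp (logit X M pr L' i j)))
      (gradPairing (Gm X M L i k) - (∑ j, Real.exp (logit X M pr L i j))⁻¹ •
        ∑ j, Real.exp (logit X M pr L i j) • gradPairing (Gm X M L i j)) L :=
    (hasFDerivAt_logit X M pr L i k).sub
    (hS.log (ne_of_gt (sumexp_pos X M pr L i k)))
  convert h using 1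
  rw [gradPairing_sub, gradPairing_sum]
  congr 1
  rw [Finset.smul_sum]
  refine Finset.sum_congr rfl fun j _ => ?_
  rw [gradPairing_smul, smul_smul]
  congr 1
  rw [prob, div_eq_inv_mul]


lemma key_identity (X : Matrix (Fin n) (Fin p) ℝ) (M : Matrix (Fin K) (Fin p) ℝ)
    (pr : Fin K → ℝ) (y : Fin n → Fin K) (L : Matrix (Fin p) (Fin d) ℝ) :
    ∑ i, ∑ k, oneHot y i k • (Gm X M L i k - ∑ j, prob X M pr L i j • Gm X M L i j) =
      Xᵀ * resid X M pr y L * (M * L) +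
        Mᵀ * ((resid X M pr y L)ᵀ * (X * L)) -
        Mᵀ * Matrix.diagonal (fun k => ∑ i, resid X M pr y L i k) * (M * L) := by
  have hsum1 : ∀ i, ∑ k, oneHot y i k = 1 := by
    intro i; simp [oneHot]
  have step1 : ∀ i, ∑ k, oneHot y i k • (Gm X M L i k - ∑ j, prob X M pr L i j • Gm X M L i j)
      = ∑ k, resid X M pr y L i k • Gm X M L i k := by
    intro i
    have : ∑ k, oneHot y i k • (Gm X M L i k - ∑ j, prob X M pr L i j • Gm X M L i j)
        = ∑ k, oneHot y i k • Gm X M L i k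
          - (∑ k, oneHot y i k) • (∑ j, prob X M pr L i j • Gm X M L i j) := by
      rw [Finset.sum_smul, ← Finset.sum_sub_distrib]
      exact Finset.sum_congr rfl fun k _ => smul_sub _ _ _
    rw [this, hsum1 i, one_smul]
    simp only [resid, Matrix.sub_apply, Matrix.of_apply, sub_smul, Finset.sum_sub_distrib]
  simp only [step1]
  ext a c
  have hdiag : (Mᵀ * Matrix.diagonal (fun k => ∑ i, resid X M pr y L i k) * (M * L)) a c
      = ∑ k, M k a * (∑ i, resid X M pr y L i k) * ((M * L) k c) := by
    rw [Matrix.mul_apply]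
    refine Finset.sum_congr rfl fun k _ => ?_
    rw [Matrix.mul_diagonal, Matrix.transpose_apply]
  simp only [Matrix.sum_apply, Matrix.smul_apply, smul_eq_mul, Gm, Matrix.of_apply,
    Matrix.add_apply, Matrix.sub_apply, hdiag]
  have hA : (Xᵀ * resid X M pr y L * (M * L)) a c
      = ∑ k, (∑ i, X i a * resid X M pr y L i k) * ((M * L) k c) := by
    rw [Matrix.mul_apply]
    refine Finset.sum_congr rfl fun k _ => ?_
    rw [Matrix.mul_apply]
    simp [Matrix.transpose_apply]
  have hB : (Mᵀ * ((resid X M pr y L)ᵀ * (X * L))) a c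
      = ∑ k, M k a * (∑ i, resid X M pr y L i k * ((X * L) i c)) := by
    rw [Matrix.mul_apply]
    refine Finset.sum_congr rfl fun k _ => ?_
    rw [Matrix.transpose_apply, Matrix.mul_apply]
    simp [Matrix.transpose_apply]
  rw [hA, hB, Finset.sum_comm, ← Finset.sum_add_distrib, ← Finset.sum_sub_distrib]
  refine Finset.sum_congr rfl fun k _ => ?_
  simp only [Finset.sum_mul, Finset.mul_sum, ← Finset.sum_add_distrib, ← Finset.sum_sub_distrib]
  refine Finset.sum_congr rfl fun i _ => ?_
  ring


/-- The direct cross-entropy gradient formula of LDA-GO: the cross-entropy loss is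
differentiable at every `L` and its gradient with respect to `L` is
`G = -(1/n) (X̃ᵀ R W + M̃ᵀ (Rᵀ Z) - M̃ᵀ diag(𝟙ᵀ R) W)`, where `Z = X̃ L`, `W = M̃ L`,
`R = Y - P`, and `diag(𝟙ᵀ R)` is the diagonal matrix of column sums of `R`. -/
theorem ce_gradient (X : Matrix (Fin n) (Fin p) ℝ) (M : Matrix (Fin K) (Fin p) ℝ)
    (pr : Fin K → ℝ) (hpr : ∀ k, 0 < pr k) (y : Fin n → Fin K)
    (L : Matrix (Fin p) (Fin d) ℝ) :
    HasFDerivAt (ceLoss X M pr y)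
      (gradPairing
        ((-(1 / (n : ℝ))) •
          (Xᵀ * resid X M pr y L * (M * L) +
            Mᵀ * ((resid X M pr y L)ᵀ * (X * L)) -
            Mᵀ * Matrix.diagonal (fun k => ∑ i, resid X M pr y L i k) * (M * L)))) L := by
  have hfun : ceLoss X M pr y =
      fun L' : Matrix (Fin p) (Fin d) ℝ =>
        -(1 / (n : ℝ)) * ∑ i, ∑ k, oneHot y i k * Real.log (prob X M pr L' i k) := rfl
  have h : HasFDerivAt
      (fun L' => ∑ i, ∑ k, oneHot y i k * Real.log (prob X M pr L' i k))
      (∑ i, ∑ k, oneHot y i k •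
        gradPairing (Gm X M L i k - ∑ j, prob X M pr L i j • Gm X M L i j)) L :=
    HasFDerivAt.fun_sum fun i _ => HasFDerivAt.fun_sum fun k _ =>
      (hasFDerivAt_logprob X M pr L i k).const_mul _
  have h2 : HasFDerivAt
      (fun L' => -(1 / (n : ℝ)) * ∑ i, ∑ k, oneHot y i k * Real.log (prob X M pr L' i k))
      ((-(1 / (n : ℝ))) • ∑ i, ∑ k, oneHot y i k •
        gradPairing (Gm X M L i k - ∑ j, prob X M pr L i j • Gm X M L i j)) L :=
    h.const_mul (-(1 / (n : ℝ)))
  rw [hfun]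
  convert h2 using 1
  rw [← key_identity X M pr y L, gradPairing_smul, gradPairing_sum]
  congr 1
  refine Finset.sum_congr rfl fun i _ => ?_
  rw [gradPairing_sum]
  exact Finset.sum_congr rfl fun k _ => gradPairing_smul _ _
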